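/- arXiv:1204.2982 — 3 statements merged into one kernel-verified Lean document; each statement's English description precedes it below -/
import Mathlib

section
/- With ρ(t) := (s·ln γ)/(4c) · 1/√(1 - G(t)²), for every T ∈ [-1,1] one has ∫₀ᵀ ρ(t)·(G(T) - G(t)) dt = (s/(2c))·(1 - √(1 - G(T)²)), where s = √(1-c²). -/
/-!
Writing `k = log γ / 2`, one has `G t = tanh (k t)`, hence `1 / √(1 - G t ^ 2) = cosh (k t)` and
`ρ t = s / (2c) · k cosh (k t)`. The integrand `k cosh (k t) (tanh (k T) - tanh (k t))` then has the
antiderivative `tanh (k T) sinh (k t) - cosh (k t)`, whose increment over `[0, T]` is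
`1 - 1 / cosh (k T) = 1 - √(1 - G T ^ 2)`.
-/

open Real

namespace Real

theorem tanh_eq_exp_two_mul (x : ℝ) : tanh x = (exp (2 * x) - 1) / (exp (2 * x) + 1) := by
  have hexp : exp (2 * x) = exp x * exp x := by rw [← exp_add, two_mul]
  rw [tanh_eq, exp_neg, hexp]
  field_simp

theorem rpow_sub_one_div_rpow_add_one {γ : ℝ} (hγ : 0 < γ) (t : ℝ) :
    (γ ^ t - 1) / (γ ^ t + 1) = tanh (log γ / 2 * t) := by
  rw [tanh_eq_exp_two_mul, rpow_def_of_pos hγ]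
  ring_nf

theorem one_div_sqrt_one_sub_tanh_sq (x : ℝ) : 1 / √(1 - tanh x ^ 2) = cosh x := by
  rw [← cosh_artanh ⟨neg_one_lt_tanh x, tanh_lt_one x⟩, artanh_tanh]

theorem sqrt_one_sub_tanh_sq (x : ℝ) : √(1 - tanh x ^ 2) = (cosh x)⁻¹ := by
  rw [← one_div_sqrt_one_sub_tanh_sq, one_div, inv_inv]

theorem tanh_mul_sinh_sub_cosh (x : ℝ) : tanh x * sinh x - cosh x = -(cosh x)⁻¹ := by
  have hcosh : cosh x ≠ 0 := (cosh_pos x).ne'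
  rw [tanh_eq_sinh_div_cosh]
  field_simp
  linear_combination -cosh_sq_sub_sinh_sq x

theorem integral_mul_cosh_mul_tanh_sub_tanh (k T : ℝ) :
    ∫ t in (0 : ℝ)..T, k * cosh (k * t) * (tanh (k * T) - tanh (k * t))
      = 1 - (cosh (k * T))⁻¹ := by
  have hintegrand : ∀ t, k * cosh (k * t) * (tanh (k * T) - tanh (k * t))
      = tanh (k * T) * (cosh (k * t) * k) - sinh (k * t) * k := fun t => by
    have hcosh : cosh (k * t) ≠ 0 := (cosh_pos _).ne'
    rw [tanh_eq_sinh_div_cosh (k * t)]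
    field_simp
  have hderiv : ∀ t, HasDerivAt (fun t => tanh (k * T) * sinh (k * t) - cosh (k * t))
      (k * cosh (k * t) * (tanh (k * T) - tanh (k * t))) t := fun t => by
    have hlin : HasDerivAt (fun t => k * t) k t := by simpa using (hasDerivAt_id t).const_mul k
    rw [hintegrand]
    exact (((hasDerivAt_sinh _).comp t hlin).const_mul _).sub ((hasDerivAt_cosh _).comp t hlin)
  have hcont : Continuous fun t => k * cosh (k * t) * (tanh (k * T) - tanh (k * t)) := by
    simp only [hintegrand]
    fun_prop
  rw [intervalIntegral.integral_eq_sub_of_hasDerivAt (fun t _ => hderiv t)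
    (hcont.intervalIntegrable 0 T), tanh_mul_sinh_sub_cosh]
  simp only [mul_zero, sinh_zero, cosh_zero]
  ring

end Real

theorem rho_integral_equation_general (c : ℝ) (hc : c ∈ Set.Ioo (0:ℝ) 1)
    (s : ℝ)
    (γ : ℝ) (hγ : γ = (1 + c) / (1 - c))
    (G : ℝ → ℝ) (hG : ∀ t : ℝ, G t = (γ ^ t - 1) / (γ ^ t + 1))
    (ρ : ℝ → ℝ) (hρ : ∀ t : ℝ, ρ t = s * Real.log γ / (4 * c) * (1 / Real.sqrt (1 - G t ^ 2))) :
    ∀ T ∈ Set.Icc (-1 : ℝ) 1,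
      ∫ t in (0 : ℝ)..T, ρ t * (G T - G t)
        = s / (2 * c) * (1 - Real.sqrt (1 - G T ^ 2)) := by
  intro T _
  have hγ0 : 0 < γ := by
    rw [hγ]
    exact div_pos (by linarith [hc.1]) (by linarith [hc.2])
  set k := log γ / 2
  have hGk : ∀ t, G t = tanh (k * t) := fun t => by
    rw [hG, rpow_sub_one_div_rpow_add_one hγ0]
  have hρk : ∀ t, ρ t = s / (2 * c) * (k * cosh (k * t)) := fun t => by
    rw [hρ, hGk, one_div_sqrt_one_sub_tanh_sq]
    ring
  calc ∫ t in (0 : ℝ)..T, ρ t * (G T - G t)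
      = ∫ t in (0 : ℝ)..T, s / (2 * c) * (k * cosh (k * t) * (tanh (k * T) - tanh (k * t))) := by
        simp only [hρk, hGk, mul_assoc]
    _ = s / (2 * c) * (1 - (cosh (k * T))⁻¹) := by
        rw [intervalIntegral.integral_const_mul, integral_mul_cosh_mul_tanh_sub_tanh]
    _ = s / (2 * c) * (1 - √(1 - G T ^ 2)) := by
        rw [hGk, sqrt_one_sub_tanh_sq]

theorem rho_integral_equation (c : ℝ) (hc : c ∈ Set.Ioo (0:ℝ) 1)
    (s : ℝ) (hs : s = Real.sqrt (1 - c ^ 2))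
    (γ : ℝ) (hγ : γ = (1 + c) / (1 - c))
    (G : ℝ → ℝ) (hG : ∀ t : ℝ, G t = (γ ^ t - 1) / (γ ^ t + 1))
    (ρ : ℝ → ℝ) (hρ : ∀ t : ℝ, ρ t = s * Real.log γ / (4 * c) * (1 / Real.sqrt (1 - G t ^ 2))) :
    ∀ T ∈ Set.Icc (-1 : ℝ) 1,
      ∫ t in (0 : ℝ)..T, ρ t * (G T - G t)
        = s / (2 * c) * (1 - Real.sqrt (1 - G T ^ 2)) :=
  rho_integral_equation_general c hc s γ hγ G hG ρ hρ
end

section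
/- Fix c ∈ (0,1), s = √(1-c²), a_z ∈ (-1,1), and T ∈ [-1,1]; set b_z := (a_z + G(T))/(1 + G(T)·a_z). Then with ρ_a(t) := (1 + G(t)·a_z)·ρ(t) and a_z(t) := (a_z + G(t))/(1 + G(t)·a_z), one has a_z·b_z + s·√(1-a_z²)·√(1-b_z²) - c·(1 - ∫₋₁¹ ρ_a(t)·|a_z(t) - b_z| dt) = 1 - c. -/
/-!
Pass to rapidities `c = tanh θ`, `a_z = tanh α`. Then `γ ^ t = exp (2θt)`, so `G t = tanh (θt)`,
`a_z(t) = tanh (α + θt)` by the addition formula for `tanh`, `b_z = tanh (α + θT)`, and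
`ρ t = θ cosh (θt) / (2 sinh θ)`. The weighted distance `ρ_a(t) |a_z(t) - b_z|` collapses to a
multiple of `|sinh (θ (t - T))|`, whose integral over `[-1, 1]` is elementary, and
`cosh (θT) = cosh (α + θT) cosh α - sinh (α + θT) sinh α` finishes the computation.
-/

open Real

namespace Real

theorem one_add_tanh_div_one_sub_tanh (x : ℝ) : (1 + tanh x) / (1 - tanh x) = exp (2 * x) := by
  have : 0 < 1 - tanh x := by linarith [tanh_lt_one x]
  rw [tanh_eq, exp_neg, two_mul, exp_add]
  field_simp
  ring

theorem one_add_tanh_mul_tanh (x y : ℝ) :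
    1 + tanh x * tanh y = cosh (x + y) / (cosh x * cosh y) := by
  rw [tanh_eq_sinh_div_cosh, tanh_eq_sinh_div_cosh, cosh_add]
  field_simp [(cosh_pos x).ne', (cosh_pos y).ne']

theorem tanh_add (x y : ℝ) : tanh (x + y) = (tanh x + tanh y) / (1 + tanh x * tanh y) := by
  rw [one_add_tanh_mul_tanh, tanh_eq_sinh_div_cosh, tanh_eq_sinh_div_cosh, tanh_eq_sinh_div_cosh,
    sinh_add]
  field_simp [(cosh_pos x).ne', (cosh_pos y).ne', (cosh_pos (x + y)).ne']

theorem tanh_sub_tanh (x y : ℝ) : tanh x - tanh y = sinh (x - y) / (cosh x * cosh y) := by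
  rw [tanh_eq_sinh_div_cosh, tanh_eq_sinh_div_cosh, sinh_sub]
  field_simp [(cosh_pos x).ne', (cosh_pos y).ne']

theorem one_add_tanh_mul_tanh_mul_cosh_mul_abs_tanh_sub (u v α : ℝ) :
    (1 + tanh u * tanh α) * cosh u * |tanh (α + u) - tanh (α + v)| =
      |sinh (u - v)| / (cosh α * cosh (α + v)) := by
  have := cosh_pos α
  have := cosh_pos (α + u)
  have := cosh_pos (α + v)
  rw [one_add_tanh_mul_tanh, tanh_sub_tanh, show α + u - (α + v) = u - v by ring, abs_div,
    abs_of_pos (by positivity : 0 < cosh (α + u) * cosh (α + v)), add_comm u α]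
  field_simp

theorem integral_sinh (a b : ℝ) : ∫ x in a..b, sinh x = cosh b - cosh a :=
  intervalIntegral.integral_eq_sub_of_hasDerivAt (fun x _ => hasDerivAt_cosh x)
    (continuous_sinh.intervalIntegrable a b)

theorem integral_abs_sinh {a b : ℝ} (ha : a ≤ 0) (hb : 0 ≤ b) :
    ∫ x in a..b, |sinh x| = cosh a + cosh b - 2 := by
  have hint : ∀ u v : ℝ, IntervalIntegrable (fun x => |sinh x|) MeasureTheory.volume u v :=
    fun u v => (continuous_abs.comp continuous_sinh).intervalIntegrable u v
  have hneg : ∫ x in a..0, |sinh x| = ∫ x in a..0, -sinh x :=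
    intervalIntegral.integral_congr fun x hx =>
      abs_of_nonpos (sinh_nonpos_iff.mpr (by rw [Set.uIcc_of_le ha] at hx; exact hx.2))
  have hpos : ∫ x in (0 : ℝ)..b, |sinh x| = ∫ x in (0 : ℝ)..b, sinh x :=
    intervalIntegral.integral_congr fun x hx =>
      abs_of_nonneg (sinh_nonneg_iff.mpr (by rw [Set.uIcc_of_le hb] at hx; exact hx.1))
  rw [← intervalIntegral.integral_add_adjacent_intervals (hint a 0) (hint 0 b), hneg, hpos,
    intervalIntegral.integral_neg, integral_sinh, integral_sinh, cosh_zero]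
  ring

theorem integral_abs_sinh_mul_sub {θ T : ℝ} (hθ : 0 < θ) (hT : T ∈ Set.Icc (-1 : ℝ) 1) :
    ∫ t in (-1 : ℝ)..1, |sinh (θ * t - θ * T)| = 2 * (cosh θ * cosh (θ * T) - 1) / θ := by
  rw [intervalIntegral.integral_comp_mul_sub (fun x => |sinh x|) hθ.ne',
    integral_abs_sinh (by nlinarith [hT.1]) (by nlinarith [hT.2]), smul_eq_mul,
    show θ * -1 - θ * T = -(θ + θ * T) by ring, cosh_neg, mul_one, cosh_add, cosh_sub]
  field_simp
  ring

end Real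

theorem epr2_saturation_rapidity {θ T : ℝ} (hθ : 0 < θ) (hT : T ∈ Set.Icc (-1 : ℝ) 1) (α : ℝ) :
    tanh α * tanh (α + θ * T) + (cosh θ)⁻¹ * (cosh α)⁻¹ * (cosh (α + θ * T))⁻¹
      - tanh θ * (1 - ∫ t in (-1 : ℝ)..1, (1 + tanh (θ * t) * tanh α) *
          (θ / (2 * sinh θ) * cosh (θ * t)) * |tanh (α + θ * t) - tanh (α + θ * T)|)
      = 1 - tanh θ := by
  set β := α + θ * T with hβ
  have hkernel : ∀ t, (1 + tanh (θ * t) * tanh α) * (θ / (2 * sinh θ) * cosh (θ * t)) *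
      |tanh (α + θ * t) - tanh β| =
        θ / (2 * sinh θ) * (|sinh (θ * t - θ * T)| / (cosh α * cosh β)) := fun t => by
    rw [← one_add_tanh_mul_tanh_mul_cosh_mul_abs_tanh_sub]
    ring
  have hcosh : cosh (θ * T) = cosh β * cosh α - sinh β * sinh α := by
    rw [← cosh_sub, hβ, add_sub_cancel_left]
  have := cosh_pos α
  have := cosh_pos β
  have := cosh_pos θ
  have := sinh_pos_iff.mpr hθ
  simp_rw [hkernel, intervalIntegral.integral_const_mul, intervalIntegral.integral_div,
    integral_abs_sinh_mul_sub hθ hT]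
  rw [hcosh, tanh_eq_sinh_div_cosh, tanh_eq_sinh_div_cosh, tanh_eq_sinh_div_cosh]
  field_simp
  ring

theorem epr2_saturation (c : ℝ) (hc : c ∈ Set.Ioo (0:ℝ) 1)
    (s : ℝ) (hs : s = Real.sqrt (1 - c ^ 2))
    (γ : ℝ) (hγ : γ = (1 + c) / (1 - c))
    (G : ℝ → ℝ) (hG : ∀ t : ℝ, G t = (γ ^ t - 1) / (γ ^ t + 1))
    (ρ : ℝ → ℝ) (hρ : ∀ t : ℝ, ρ t = s * Real.log γ / (4 * c) * (1 / Real.sqrt (1 - G t ^ 2)))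
    (az : ℝ) (haz : az ∈ Set.Ioo (-1 : ℝ) 1)
    (T : ℝ) (hT : T ∈ Set.Icc (-1 : ℝ) 1)
    (bz : ℝ) (hbz : bz = (az + G T) / (1 + G T * az))
    (ρa : ℝ → ℝ) (hρa : ∀ t : ℝ, ρa t = (1 + G t * az) * ρ t) :
    az * bz + s * Real.sqrt (1 - az ^ 2) * Real.sqrt (1 - bz ^ 2)
      - c * (1 - ∫ t in (-1 : ℝ)..1, ρa t * |(az + G t) / (1 + G t * az) - bz|)
      = 1 - c := by
  obtain ⟨θ, hθ, rfl⟩ : ∃ θ, 0 < θ ∧ tanh θ = c :=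
    ⟨artanh c, artanh_pos hc, tanh_artanh ⟨by linarith [hc.1], hc.2⟩⟩
  obtain ⟨α, rfl⟩ : ∃ α, tanh α = az := ⟨artanh az, tanh_artanh haz⟩
  have hγθ : γ = exp (2 * θ) := hγ.trans (one_add_tanh_div_one_sub_tanh θ)
  have hsθ : s = (cosh θ)⁻¹ := hs.trans (sqrt_one_sub_tanh_sq θ)
  have hGθ : ∀ t, G t = tanh (θ * t) := fun t => by
    rw [hG, hγθ, ← exp_mul, tanh_eq_exp_two_mul, mul_assoc]
  have hρθ : ∀ t, ρ t = θ / (2 * sinh θ) * cosh (θ * t) := fun t => by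
    have := cosh_pos θ
    rw [hρ, hsθ, hγθ, log_exp, hGθ, sqrt_one_sub_tanh_sq, tanh_eq_sinh_div_cosh]
    field_simp
    ring
  have hboost : ∀ t, (tanh α + tanh (θ * t)) / (1 + tanh (θ * t) * tanh α) =
      tanh (α + θ * t) := fun t => by
    rw [tanh_add, mul_comm (tanh (θ * t))]
  rw [hbz, hGθ, hboost, sqrt_one_sub_tanh_sq, sqrt_one_sub_tanh_sq, hsθ]
  simp only [hρa, hρθ, hGθ, hboost]
  exact epr2_saturation_rapidity hθ hT α
end

section
/- Fix c ∈ [0,1), s = √(1-c²), a_z ∈ [-1,1], and b_z ∈ [-1,1] with b_z ≥ (a_z + c)/(1 + c·a_z). Then -(1-c) ≤ a_z·b_z + s·√(1-a_z²)·√(1-b_z²) - c·(1 - b_z + a_z) ≤ 1 - c. -/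
/-! Put `x = (1 - c)(1 - a_z)(1 + b_z)` and `y = (1 + c)(1 + a_z)(1 - b_z)`. Then `xy = s²(1 - a_z²)(1 - b_z²)`
and the quantity in question is exactly `(1 - c) - (√x - √y)² / 2`, which gives the upper bound.
The sector condition on `b_z` says `y ≤ x`, so `0 ≤ √x - √y ≤ √x` and `(√x - √y)² ≤ x ≤ 4(1 - c)`. -/

open Real Set

lemma sub_sqrt_sq_le {x y : ℝ} (hy : 0 ≤ y) (hyx : y ≤ x) : (√x - √y) ^ 2 ≤ x := by
  have hle : √y ≤ √x := Real.sqrt_le_sqrt hyx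
  calc (√x - √y) ^ 2 ≤ √x ^ 2 := by nlinarith [Real.sqrt_nonneg y]
    _ = x := Real.sq_sqrt (hy.trans hyx)

lemma add_div_one_add_mul_le_iff {a b c : ℝ} (hden : 0 < 1 + c * a) :
    (a + c) / (1 + c * a) ≤ b ↔ (1 + c) * (1 + a) * (1 - b) ≤ (1 - c) * (1 - a) * (1 + b) := by
  rw [div_le_iff₀ hden]
  constructor <;> intro h <;> linarith

lemma correlator_eq_sub_sq {a b c : ℝ} (ha : a ∈ Icc (-1 : ℝ) 1) (hb : b ∈ Icc (-1 : ℝ) 1)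
    (hc : c ∈ Icc (-1 : ℝ) 1) :
    a * b + √(1 - c ^ 2) * √(1 - a ^ 2) * √(1 - b ^ 2) - c * (1 - b + a)
      = (1 - c) - (√((1 - c) * (1 - a) * (1 + b)) - √((1 + c) * (1 + a) * (1 - b))) ^ 2 / 2 := by
  obtain ⟨ha₀, ha₁⟩ := ha
  obtain ⟨hb₀, hb₁⟩ := hb
  obtain ⟨hc₀, hc₁⟩ := hc
  have hx : 0 ≤ (1 - c) * (1 - a) * (1 + b) := by
    apply mul_nonneg (mul_nonneg _ _) <;> linarith
  have hy : 0 ≤ (1 + c) * (1 + a) * (1 - b) := by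
    apply mul_nonneg (mul_nonneg _ _) <;> linarith
  have hprod : √(1 - c ^ 2) * √(1 - a ^ 2) * √(1 - b ^ 2)
      = √((1 - c) * (1 - a) * (1 + b)) * √((1 + c) * (1 + a) * (1 - b)) := by
    have hc2 : 0 ≤ 1 - c ^ 2 := by nlinarith
    have ha2 : 0 ≤ 1 - a ^ 2 := by nlinarith
    rw [← Real.sqrt_mul hc2, ← Real.sqrt_mul (mul_nonneg hc2 ha2), ← Real.sqrt_mul hx]
    congr 1
    ring
  rw [hprod, sub_sq, Real.sq_sqrt hx, Real.sq_sqrt hy]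
  ring

theorem bgs_outside_hardy_sector (c : ℝ) (hc : c ∈ Set.Ico (0:ℝ) 1)
    (s : ℝ) (hs : s = Real.sqrt (1 - c ^ 2))
    (az : ℝ) (haz : az ∈ Set.Icc (-1 : ℝ) 1)
    (bz : ℝ) (hbz : bz ∈ Set.Icc (-1 : ℝ) 1)
    (hb : (az + c) / (1 + c * az) ≤ bz) :
    -(1 - c) ≤ az * bz + s * Real.sqrt (1 - az ^ 2) * Real.sqrt (1 - bz ^ 2)
        - c * (1 - bz + az) ∧
      az * bz + s * Real.sqrt (1 - az ^ 2) * Real.sqrt (1 - bz ^ 2)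
        - c * (1 - bz + az) ≤ 1 - c := by
  obtain ⟨hc₀, hc₁⟩ := hc
  obtain ⟨ha₀, ha₁⟩ := haz
  obtain ⟨hb₀, hb₁⟩ := hbz
  have hden : 0 < 1 + c * az := by nlinarith
  have hyx := (add_div_one_add_mul_le_iff hden).1 hb
  have hy : 0 ≤ (1 + c) * (1 + az) * (1 - bz) := by
    apply mul_nonneg (mul_nonneg _ _) <;> linarith
  have hx_le : (1 - c) * (1 - az) * (1 + bz) ≤ 4 * (1 - c) := by
    have : (1 - az) * (1 + bz) ≤ 4 := by nlinarith
    nlinarith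
  have hgap := sub_sqrt_sq_le hy hyx
  rw [hs, correlator_eq_sub_sq ⟨ha₀, ha₁⟩ ⟨hb₀, hb₁⟩ ⟨by linarith, hc₁.le⟩]
  constructor
  · linarith
  · linarith [sq_nonneg (√((1 - c) * (1 - az) * (1 + bz)) - √((1 + c) * (1 + az) * (1 - bz)))]
end
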